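/- Let α ∈ ℝ and define ψ(t) = (2 + α²t) / (2(1 + α²t)) for t > 0 and Q(x,t) = (π√t)^{−1} e^{−x²/(2t)} Φ(αx) for x ∈ ℝ, t > 0, where Φ(u) = ∫_{−∞}^{u} e^{−s²/2} ds. Then Q satisfies the Kolmogorov forward equation ∂_t Q(x,t) = −∂_x [ ψ(t) (∂_x log Φ(αx)) Q(x,t) ] + (1/2) ∂_{xx} Q(x,t) for all x ∈ ℝ and t > 0. Thus Q is the skew-Normal density with constant skewness α solving the forward equation of the SDE dX_t = ψ(t) ∂_x log Φ(αx)|_{x=X_t} dt + dW_t, X_0 = 0. -/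

import Mathlib

/-- Unnormalized Gaussian cumulative integral: `Φ u = ∫_{-∞}^u e^{-s²/2} ds`. -/
noncomputable def Phi (u : ℝ) : ℝ := ∫ s in Set.Iic u, Real.exp (-s ^ 2 / 2)

/-- Drift amplitude of Theorem 2: `ψ(t) = (2 + α²t)/(2(1 + α²t))`. -/
noncomputable def psi (α t : ℝ) : ℝ := (2 + α ^ 2 * t) / (2 * (1 + α ^ 2 * t))

/-- The skew-Normal density with constant skewness `α`:
`Q(x,t) = (π√t)⁻¹ e^{-x²/(2t)} Φ(αx)`. -/
noncomputable def Q (α t x : ℝ) : ℝ :=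
  (Real.pi * Real.sqrt t)⁻¹ * Real.exp (-x ^ 2 / (2 * t)) * Phi (α * x)

open Real MeasureTheory Set

lemma gauss_integrable : Integrable (fun s : ℝ => Real.exp (-s ^ 2 / 2)) := by
  have h : Integrable (fun s : ℝ => Real.exp (-(1/2) * s ^ 2)) :=
    integrable_exp_neg_mul_sq (by norm_num)
  convert h using 2 with s
  ring_nf

lemma Phi_pos (u : ℝ) : 0 < Phi u := by
  rw [Phi, setIntegral_pos_iff_support_of_nonneg_ae]
  · have hs : Function.support (fun s : ℝ => Real.exp (-s ^ 2 / 2)) = Set.univ := by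
      ext s; simp [(Real.exp_pos _).ne']
    rw [hs, Set.univ_inter]
    simp [Real.volume_Iic]
  · filter_upwards with s using (Real.exp_pos _).le
  · exact gauss_integrable.integrableOn

lemma hasDerivAt_Phi (u : ℝ) : HasDerivAt Phi (Real.exp (-u ^ 2 / 2)) u := by
  have key : ∀ v : ℝ, Phi v = Phi 0 + ∫ s in (0:ℝ)..v, Real.exp (-s ^ 2 / 2) := by
    intro v
    rw [← intervalIntegral.integral_Iic_sub_Iic gauss_integrable.integrableOn
      gauss_integrable.integrableOn]
    simp only [Phi]; ring
  have hcont : Continuous (fun s : ℝ => Real.exp (-s ^ 2 / 2)) := by continuity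
  have hint : IntervalIntegrable (fun s : ℝ => Real.exp (-s ^ 2 / 2)) volume 0 u :=
    hcont.intervalIntegrable 0 u
  have hd := (intervalIntegral.integral_hasDerivAt_right hint
    (hcont.stronglyMeasurableAtFilter _ _) hcont.continuousAt).const_add (Phi 0)
  have heq : (fun v : ℝ => Phi 0 + ∫ s in (0:ℝ)..v, Real.exp (-s ^ 2 / 2)) = Phi :=
    funext fun v => (key v).symm
  rwa [heq] at hd

lemma hasDerivAt_PhiComp (α y : ℝ) :
    HasDerivAt (fun z : ℝ => Phi (α * z)) (α * Real.exp (-(α * y) ^ 2 / 2)) y := by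
  have h1 : HasDerivAt (fun z : ℝ => α * z) α y := by
    simpa using (hasDerivAt_id y).const_mul α
  have h2 := (hasDerivAt_Phi (α * y)).comp y h1
  exact h2.congr_deriv (mul_comm _ _)


/-- Theorem 2: the skew-Normal density with constant skewness `α` solves the Kolmogorov
forward equation `∂_t Q = -∂_x [ψ(t) (∂_x log Φ(αx)) Q] + (1/2) ∂_{xx} Q` for all
`x ∈ ℝ`, `t > 0`. -/
theorem stmt_7 (α : ℝ) :
    ∀ (x : ℝ), ∀ t > (0 : ℝ),
      deriv (fun τ => Q α τ x) t
        = - deriv (fun y =>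
              psi α t * deriv (fun z => Real.log (Phi (α * z))) y * Q α t y) x
          + (1 / 2) * deriv (deriv (fun y => Q α t y)) x := by
  intro x t ht
  have ht0 : t ≠ 0 := ht.ne'
  have hπ : Real.pi ≠ 0 := Real.pi_ne_zero
  have hstpos : 0 < Real.sqrt t := Real.sqrt_pos.mpr ht
  have hst : Real.sqrt t ≠ 0 := hstpos.ne'
  -- time derivative
  have hsq : HasDerivAt Real.sqrt (1 / (2 * Real.sqrt t)) t := Real.hasDerivAt_sqrt ht0
  have hinv : HasDerivAt (fun τ : ℝ => (Real.pi * Real.sqrt τ)⁻¹)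
      (-(Real.pi * (1 / (2 * Real.sqrt t))) / (Real.pi * Real.sqrt t) ^ 2) t :=
    (hsq.const_mul Real.pi).inv (mul_ne_zero hπ hst)
  have harg : HasDerivAt (fun τ : ℝ => -x ^ 2 / (2 * τ)) (x ^ 2 / (2 * t ^ 2)) t := by
    have h2 : (fun τ : ℝ => -x ^ 2 / (2 * τ)) = fun τ : ℝ => -x ^ 2 / 2 * τ⁻¹ := by
      funext τ; ring
    rw [h2]
    have h := (hasDerivAt_inv ht0).const_mul (-x ^ 2 / 2)
    refine h.congr_deriv ?_
    ring
  have htime : HasDerivAt (fun τ : ℝ => Q α τ x)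
      ((-(Real.pi * (1 / (2 * Real.sqrt t))) / (Real.pi * Real.sqrt t) ^ 2 *
          Real.exp (-x ^ 2 / (2 * t))
        + (Real.pi * Real.sqrt t)⁻¹ * (Real.exp (-x ^ 2 / (2 * t)) * (x ^ 2 / (2 * t ^ 2))))
        * Phi (α * x)) t :=
    (hinv.mul harg.exp).mul_const (Phi (α * x))
  -- spatial pieces
  have hEin : ∀ y : ℝ, HasDerivAt (fun y : ℝ => -(α * y) ^ 2 / 2) (-(α ^ 2 * y)) y := by
    intro y
    have h := (((hasDerivAt_id y).const_mul α).pow 2).neg.div_const 2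
    refine h.congr_deriv ?_
    simp only [id_eq]
    ring
  have hE : ∀ y : ℝ, HasDerivAt (fun y : ℝ => Real.exp (-(α * y) ^ 2 / 2))
      (Real.exp (-(α * y) ^ 2 / 2) * (-(α ^ 2 * y))) y := fun y => (hEin y).exp
  have hGin : ∀ y : ℝ, HasDerivAt (fun y : ℝ => -y ^ 2 / (2 * t)) (-(y / t)) y := by
    intro y
    have h := ((hasDerivAt_pow 2 y).neg.div_const (2 * t))
    refine h.congr_deriv ?_
    field_simp
    ring
  have hG : ∀ y : ℝ, HasDerivAt (fun y : ℝ => Real.exp (-y ^ 2 / (2 * t)))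
      (Real.exp (-y ^ 2 / (2 * t)) * (-(y / t))) y := fun y => (hGin y).exp
  -- first spatial derivative of Q
  have hQx : ∀ y : ℝ, HasDerivAt (fun y : ℝ => Q α t y)
      ((Real.pi * Real.sqrt t)⁻¹ * (Real.exp (-y ^ 2 / (2 * t)) * (-(y / t))) * Phi (α * y)
        + (Real.pi * Real.sqrt t)⁻¹ * Real.exp (-y ^ 2 / (2 * t)) *
            (α * Real.exp (-(α * y) ^ 2 / 2))) y :=
    fun y => (((hG y).const_mul ((Real.pi * Real.sqrt t)⁻¹)).mul (hasDerivAt_PhiComp α y))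
  have hderivQ : deriv (fun y : ℝ => Q α t y)
      = fun y : ℝ =>
          (Real.pi * Real.sqrt t)⁻¹ * (Real.exp (-y ^ 2 / (2 * t)) * (-(y / t)))
            * Phi (α * y)
          + (Real.pi * Real.sqrt t)⁻¹ * Real.exp (-y ^ 2 / (2 * t)) *
              (α * Real.exp (-(α * y) ^ 2 / 2)) :=
    funext fun y => (hQx y).deriv
  have hDeq : (fun y : ℝ =>
          (Real.pi * Real.sqrt t)⁻¹ * (Real.exp (-y ^ 2 / (2 * t)) * (-(y / t)))
            * Phi (α * y)
          + (Real.pi * Real.sqrt t)⁻¹ * Real.exp (-y ^ 2 / (2 * t)) *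
              (α * Real.exp (-(α * y) ^ 2 / 2)))
      = fun y : ℝ =>
          (-((Real.pi * Real.sqrt t)⁻¹ / t)) * (y * Real.exp (-y ^ 2 / (2 * t)) * Phi (α * y))
          + ((Real.pi * Real.sqrt t)⁻¹ * α) *
              (Real.exp (-y ^ 2 / (2 * t)) * Real.exp (-(α * y) ^ 2 / 2)) := by
    funext y; ring
  -- second spatial derivative
  have h2nd : HasDerivAt (fun y : ℝ =>
          (-((Real.pi * Real.sqrt t)⁻¹ / t)) * (y * Real.exp (-y ^ 2 / (2 * t)) * Phi (α * y))
          + ((Real.pi * Real.sqrt t)⁻¹ * α) *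
              (Real.exp (-y ^ 2 / (2 * t)) * Real.exp (-(α * y) ^ 2 / 2)))
      ((-((Real.pi * Real.sqrt t)⁻¹ / t)) *
          ((1 * Real.exp (-x ^ 2 / (2 * t)) + x * (Real.exp (-x ^ 2 / (2 * t)) * (-(x / t))))
              * Phi (α * x)
            + x * Real.exp (-x ^ 2 / (2 * t)) * (α * Real.exp (-(α * x) ^ 2 / 2)))
        + ((Real.pi * Real.sqrt t)⁻¹ * α) *
            (Real.exp (-x ^ 2 / (2 * t)) * (-(x / t)) * Real.exp (-(α * x) ^ 2 / 2)
              + Real.exp (-x ^ 2 / (2 * t)) *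
                  (Real.exp (-(α * x) ^ 2 / 2) * (-(α ^ 2 * x))))) x :=
    ((((hasDerivAt_id x).mul (hG x)).mul (hasDerivAt_PhiComp α x)).const_mul
        (-((Real.pi * Real.sqrt t)⁻¹ / t))).add
      (((hG x).mul (hE x)).const_mul ((Real.pi * Real.sqrt t)⁻¹ * α))
  -- drift term
  have hgfun : deriv (fun z : ℝ => Real.log (Phi (α * z)))
      = fun y : ℝ => α * Real.exp (-(α * y) ^ 2 / 2) / Phi (α * y) :=
    funext fun y => ((hasDerivAt_PhiComp α y).log (Phi_pos _).ne').deriv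
  have hBeq : (fun y : ℝ =>
        psi α t * deriv (fun z : ℝ => Real.log (Phi (α * z))) y * Q α t y)
      = fun y : ℝ => (psi α t * α * (Real.pi * Real.sqrt t)⁻¹) *
          (Real.exp (-(α * y) ^ 2 / 2) * Real.exp (-y ^ 2 / (2 * t))) := by
    rw [hgfun]
    funext y
    have hFy : Phi (α * y) ≠ 0 := (Phi_pos _).ne'
    simp only [Q]
    field_simp
  have hB : HasDerivAt (fun y : ℝ => (psi α t * α * (Real.pi * Real.sqrt t)⁻¹) *
          (Real.exp (-(α * y) ^ 2 / 2) * Real.exp (-y ^ 2 / (2 * t))))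
      ((psi α t * α * (Real.pi * Real.sqrt t)⁻¹) *
        (Real.exp (-(α * x) ^ 2 / 2) * (-(α ^ 2 * x)) * Real.exp (-x ^ 2 / (2 * t))
          + Real.exp (-(α * x) ^ 2 / 2) * (Real.exp (-x ^ 2 / (2 * t)) * (-(x / t))))) x :=
    ((hE x).mul (hG x)).const_mul _
  rw [htime.deriv, hBeq, hB.deriv, hderivQ, hDeq, h2nd.deriv]
  simp only [psi]
  have hs2 : Real.sqrt t ^ 2 = t := Real.sq_sqrt ht.le
  set s := Real.sqrt t with hs
  rw [← hs2]
  have h1 : (1 : ℝ) + α ^ 2 * s ^ 2 ≠ 0 := by positivity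
  have hsne : s ≠ 0 := hst
  field_simp
  ring
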